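/- arXiv:2512.24777 — 6 statements merged into one kernel-verified Lean document; each statement's English description precedes it below -/
import Mathlib

section
/- Let A be a square matrix of class Z^+ of order K. If there exists x > 0 with Ax ≫ 0, then all principal minors of A are positive. -/
open Matrix Finset in
/-- Key lemma: if `B` has nonpositive off-diagonal entries and `B.mulVec x ≫ 0`
for some strictly positive `x`, then `det B > 0`. -/
lemma zplus_det_pos {ι : Type*} [Fintype ι] [DecidableEq ι]
    (B : Matrix ι ι ℝ) (x : ι → ℝ) (hx : ∀ i, 0 < x i)
    (hoff : ∀ i j, i ≠ j → B i j ≤ 0) (hBx : ∀ i, 0 < B.mulVec x i) :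
    0 < B.det := by
  -- off-diagonal row contribution is nonpositive
  have hofft : ∀ i, ∑ j ∈ univ.erase i, B i j * x j ≤ 0 := by
    intro i
    apply Finset.sum_nonpos
    intro j hj
    exact mul_nonpos_of_nonpos_of_nonneg (hoff i j (Finset.ne_of_mem_erase hj).symm)
      (hx j).le
  have hsum : ∀ i, B.mulVec x i = B i i * x i + ∑ j ∈ univ.erase i, B i j * x j := by
    intro i
    rw [Matrix.mulVec, dotProduct, ← Finset.add_sum_erase _ _ (Finset.mem_univ i)]
  have hdiag : ∀ i, 0 < B i i * x i := by
    intro i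
    have h := hBx i
    rw [hsum i] at h
    nlinarith [hofft i]
  have hdiag' : ∀ i, 0 < B i i := by
    intro i
    by_contra h
    push_neg at h
    nlinarith [hdiag i, hx i]
  -- the homotopy
  set M : ℝ → Matrix ι ι ℝ := fun t i j => if i = j then B i i else (1 - t) * B i j with hM
  have hM0 : M 0 = B := by
    funext i j
    by_cases h : i = j <;> simp [hM, h]
  have hM1 : M 1 = Matrix.diagonal (fun i => B i i) := by
    funext i j
    by_cases h : i = j <;> simp [hM, h, Matrix.diagonal]
  -- M t is nonsingular for t ∈ [0,1]
  have hMne : ∀ t ∈ Set.Icc (0:ℝ) 1, (M t).det ≠ 0 := by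
    intro t ht
    obtain ⟨ht0, ht1⟩ := ht
    -- off-diagonal entries of M t
    have hMoff : ∀ i j, i ≠ j → M t i j ≤ 0 := by
      intro i j hij
      simp only [hM, if_neg hij]
      exact mul_nonpos_of_nonneg_of_nonpos (by linarith) (hoff i j hij)
    have hMx : ∀ i, 0 < (M t).mulVec x i := by
      intro i
      have : (M t).mulVec x i = B i i * x i + (1 - t) * ∑ j ∈ univ.erase i, B i j * x j := by
        rw [Matrix.mulVec, dotProduct, ← Finset.add_sum_erase _ _ (Finset.mem_univ i)]
        simp only [hM, if_pos rfl, Finset.mul_sum]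
        congr 1
        apply Finset.sum_congr rfl
        intro j hj
        rw [if_neg (Ne.symm (Finset.ne_of_mem_erase hj))]
        ring
      rw [this]
      have h1 : B i i * x i + ∑ j ∈ univ.erase i, B i j * x j > 0 := by
        rw [← hsum i]; exact hBx i
      nlinarith [hofft i, hdiag i]
    -- scale columns by x to get a strictly diagonally dominant matrix
    have key : ((M t) * Matrix.diagonal x).det ≠ 0 := by
      apply det_ne_zero_of_sum_row_lt_diag
      intro k
      have hrow : ∀ j ∈ univ.erase k, ‖((M t) * Matrix.diagonal x) k j‖
          = -(M t k j * x j) := by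
        intro j hj
        rw [Matrix.mul_diagonal]
        rw [Real.norm_eq_abs, abs_of_nonpos
          (mul_nonpos_of_nonpos_of_nonneg (hMoff k j (Finset.ne_of_mem_erase hj).symm) (hx j).le)]
      rw [Finset.sum_congr rfl hrow]
      have hdd : M t k k * x k > ∑ j ∈ univ.erase k, -(M t k j * x j) := by
        have := hMx k
        rw [Matrix.mulVec, dotProduct, ← Finset.add_sum_erase _ _ (Finset.mem_univ k)]
          at this
        have hsn : ∑ j ∈ univ.erase k, -(M t k j * x j) = -∑ j ∈ univ.erase k, M t k j * x j := by
          rw [Finset.sum_neg_distrib]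
        rw [hsn]
        linarith
      have hMkk : M t k k = B k k := by simp [hM]
      rw [Matrix.mul_diagonal, Real.norm_eq_abs, abs_of_pos (by rw [hMkk]; exact hdiag k)]
      exact hdd
    rw [Matrix.det_mul, Matrix.det_diagonal] at key
    exact fun h => key (by rw [h, zero_mul])
  -- continuity of t ↦ det (M t)
  have hcont : Continuous fun t => (M t).det := by
    apply Continuous.matrix_det
    apply continuous_matrix
    intro i j
    by_cases h : i = j
    · simp only [hM, if_pos h]; exact continuous_const
    · simp only [hM, if_neg h]; fun_prop
  -- det (M 1) > 0
  have hf1 : 0 < (M 1).det := by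
    rw [hM1, Matrix.det_diagonal]
    exact Finset.prod_pos (fun i _ => hdiag' i)
  -- conclude by IVT
  by_contra hle
  push_neg at hle
  have hf0 : (M 0).det < 0 := by
    rw [hM0]
    exact lt_of_le_of_ne hle (by rw [← hM0] at hle ⊢; exact hMne 0 ⟨le_refl _, zero_le_one⟩)
  have : (0:ℝ) ∈ Set.Icc ((M 0).det) ((M 1).det) := ⟨hf0.le, hf1.le⟩
  have hsub := intermediate_value_Icc (zero_le_one) hcont.continuousOn
  obtain ⟨t, ht, hft⟩ := hsub this
  exact hMne t ht hft

/-- For a `Z⁺`-matrix `A`, if there is `x > 0` with `A.mulVec x ≫ 0`, then all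
principal minors of `A` are positive. -/
theorem zplus_viable_principal_minors_pos
    (K : ℕ) (A : Matrix (Fin K) (Fin K) ℝ)
    (hdiag : ∀ i, 0 < A i i)
    (hoff : ∀ i j, i ≠ j → A i j ≤ 0)
    (x : Fin K → ℝ) (hx : ∀ i, 0 ≤ x i) (hx0 : x ≠ 0)
    (hAx : ∀ i, 0 < A.mulVec x i) :
    ∀ s : Finset (Fin K),
      0 < (A.submatrix (fun i : {i // i ∈ s} => (i : Fin K))
            (fun i : {i // i ∈ s} => (i : Fin K))).det := by
  -- x is strictly positive
  have hxpos : ∀ i, 0 < x i := by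
    intro i
    rcases lt_or_eq_of_le (hx i) with h | h
    · exact h
    · exfalso
      have h0 : x i = 0 := h.symm
      have := hAx i
      rw [Matrix.mulVec, dotProduct] at this
      have hle : ∑ j, A i j * x j ≤ 0 := by
        apply Finset.sum_nonpos
        intro j _
        by_cases hij : j = i
        · rw [hij, h0, mul_zero]
        · exact mul_nonpos_of_nonpos_of_nonneg (hoff i j (Ne.symm hij)) (hx j)
      linarith
  intro s
  apply zplus_det_pos _ (fun i : {i // i ∈ s} => x i) (fun i => hxpos i)
  · intro i j hij
    exact hoff i j (fun h => hij (Subtype.ext h))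
  · rintro ⟨i, hi⟩
    have hexp : (A.submatrix (fun i : {i // i ∈ s} => (i : Fin K))
        (fun i : {i // i ∈ s} => (i : Fin K))).mulVec (fun i : {i // i ∈ s} => x i) ⟨i, hi⟩
        = ∑ j ∈ s, A i j * x j := by
      rw [Matrix.mulVec, dotProduct]
      exact Finset.sum_coe_sort s (fun j => A i j * x j)
    rw [hexp]
    have hsplit : ∑ j, A i j * x j = ∑ j ∈ s, A i j * x j + ∑ j ∈ sᶜ, A i j * x j := by
      rw [Finset.sum_add_sum_compl]
    have hcomp : ∑ j ∈ sᶜ, A i j * x j ≤ 0 := by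
      apply Finset.sum_nonpos
      intro j hj
      have hij : i ≠ j := fun h => (Finset.mem_compl.mp hj) (h ▸ hi)
      exact mul_nonpos_of_nonpos_of_nonneg (hoff i j hij) (hx j)
    have := hAx i
    rw [Matrix.mulVec, dotProduct] at this
    linarith [hsplit ▸ this]
end

section
/- Let A be a square Z^+-matrix of order K satisfying the Hawkins-Simon condition (all leading principal minors positive). Then for any nonnegative vector y ∈ R^K there exists a nonnegative vector x ∈ R^K with Ax = y. -/
/-!
Gaussian elimination on the pivot `A 0 0 > 0`. Its Schur complement is again a Z-matrix, since
`A i 0 * A 0 j ≥ 0` off the first row and column, and each of its leading minors is the next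
leading minor of `A` divided by `A 0 0`, so it again satisfies the Hawkins–Simon condition. The
eliminated right-hand side `y i - A i 0 * y 0 / A 0 0` stays nonnegative, so by induction the
reduced system has a nonnegative solution, and back substitution gives the first coordinate
`(y 0 - ∑ j, A 0 j * x j) / A 0 0 ≥ 0`.
-/

open Matrix

section Elimination

variable {R : Type*} [Field R] {n : ℕ}

def schurComplementZero (A : Matrix (Fin (n + 1)) (Fin (n + 1)) R) : Matrix (Fin n) (Fin n) R :=
  Matrix.of fun i j => A i.succ j.succ - A i.succ 0 * A 0 j.succ / A 0 0

theorem schurComplementZero_submatrix_castLE (A : Matrix (Fin (n + 1)) (Fin (n + 1)) R)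
    {k : ℕ} (hk : k ≤ n) :
    (schurComplementZero A).submatrix (Fin.castLE hk) (Fin.castLE hk) =
      schurComplementZero (A.submatrix (Fin.castLE (Nat.succ_le_succ hk))
        (Fin.castLE (Nat.succ_le_succ hk))) :=
  rfl

theorem det_eq_mul_det_schurComplementZero (A : Matrix (Fin (n + 1)) (Fin (n + 1)) R)
    (h : A 0 0 ≠ 0) : A.det = A 0 0 * (schurComplementZero A).det := by
  -- subtracting `A i 0 / A 0 0` times row `0` from row `i` clears column `0` below the pivot
  let C : Matrix (Fin (n + 1)) (Fin (n + 1)) R :=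
    Matrix.of fun i j => if i = 0 then A 0 j else A i j - A i 0 * A 0 j / A 0 0
  have hAC : A.det = C.det := by
    refine det_eq_of_forall_row_eq_smul_add_const
      (fun i => if i = 0 then 0 else A i 0 / A 0 0) 0 (by simp) fun i j => ?_
    by_cases hi : i = 0
    · simp [C, hi]
    · simp only [C, of_apply, hi, ↓reduceIte]
      ring
  have hcol : ∀ i : Fin n, C i.succ 0 = 0 := fun i => by
    simp [C, Fin.succ_ne_zero, h]
  rw [hAC, det_succ_column_zero, Fin.sum_univ_succ]
  simp only [hcol, mul_zero, zero_mul, Finset.sum_const_zero, add_zero]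
  simp [C, schurComplementZero, submatrix]

theorem mulVec_cons_eq_of_schurComplementZero {A : Matrix (Fin (n + 1)) (Fin (n + 1)) R}
    (h : A 0 0 ≠ 0) {x : Fin n → R} {y : Fin (n + 1) → R}
    (hx : schurComplementZero A *ᵥ x = fun i => y i.succ - A i.succ 0 * y 0 / A 0 0) :
    A *ᵥ Fin.cons ((y 0 - ∑ j, A 0 j.succ * x j) / A 0 0) x = y := by
  have hrow : ∀ i, (A *ᵥ Fin.cons ((y 0 - ∑ j, A 0 j.succ * x j) / A 0 0) x) i =
      A i 0 * ((y 0 - ∑ j, A 0 j.succ * x j) / A 0 0) + ∑ j, A i j.succ * x j := fun i => by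
    simp [mulVec, dotProduct, Fin.sum_univ_succ]
  funext i
  refine Fin.cases ?_ (fun i => ?_) i
  · rw [hrow]
    field_simp
    ring
  · have hxi := congrFun hx i
    simp only [mulVec, dotProduct, schurComplementZero, of_apply, sub_mul,
      Finset.sum_sub_distrib] at hxi
    have hfactor : ∑ j, A i.succ 0 * A 0 j.succ / A 0 0 * x j =
        A i.succ 0 / A 0 0 * ∑ j, A 0 j.succ * x j := by
      rw [Finset.mul_sum]
      exact Finset.sum_congr rfl fun j _ => by ring
    rw [hfactor] at hxi
    rw [hrow]
    linear_combination hxi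

end Elimination

section Ordered

variable {R : Type*} [Field R] [LinearOrder R] [IsStrictOrderedRing R] {n : ℕ}
  {A : Matrix (Fin (n + 1)) (Fin (n + 1)) R}

theorem schurComplementZero_apply_nonpos_of_ne (hA : ∀ i j, i ≠ j → A i j ≤ 0)
    (hpivot : 0 < A 0 0) {i j : Fin n} (hij : i ≠ j) : schurComplementZero A i j ≤ 0 := by
  have hprod : 0 ≤ A i.succ 0 * A 0 j.succ :=
    mul_nonneg_of_nonpos_of_nonpos (hA _ _ i.succ_ne_zero) (hA _ _ j.succ_ne_zero.symm)
  have := hA _ _ (Fin.succ_injective _ |>.ne hij)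
  simp only [schurComplementZero, of_apply]
  linarith [div_nonneg hprod hpivot.le]

theorem det_submatrix_castLE_schurComplementZero_pos
    (hA : ∀ k (hk : k ≤ n + 1), 0 < (A.submatrix (Fin.castLE hk) (Fin.castLE hk)).det)
    (k : ℕ) (hk : k ≤ n) :
    0 < ((schurComplementZero A).submatrix (Fin.castLE hk) (Fin.castLE hk)).det := by
  have hpivot : 0 < A 0 0 := by simpa using hA 1 (by omega)
  have hminor := hA (k + 1) (Nat.succ_le_succ hk)
  rw [det_eq_mul_det_schurComplementZero _ (by exact hpivot.ne'),
    ← schurComplementZero_submatrix_castLE _ hk] at hminor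
  exact pos_of_mul_pos_right hminor hpivot.le

end Ordered

theorem zplus_hawkinsSimon_surjective_on_nonneg_general
    (K : ℕ) (A : Matrix (Fin K) (Fin K) ℝ)
    (hoff : ∀ i j, i ≠ j → A i j ≤ 0)
    (hHS : ∀ k : ℕ, ∀ h : k ≤ K,
      0 < (A.submatrix (Fin.castLE h) (Fin.castLE h)).det)
    (y : Fin K → ℝ) (hy : ∀ i, 0 ≤ y i) :
    ∃ x : Fin K → ℝ, (∀ i, 0 ≤ x i) ∧ A.mulVec x = y := by
  induction K with
  | zero => exact ⟨0, fun i => i.elim0, funext fun i => i.elim0⟩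
  | succ K ih =>
    have hpivot : 0 < A 0 0 := by simpa using hHS 1 (by omega)
    have hz : ∀ i : Fin K, 0 ≤ y i.succ - A i.succ 0 * y 0 / A 0 0 := fun i =>
      sub_nonneg_of_le <| (div_nonpos_of_nonpos_of_nonneg
        (mul_nonpos_of_nonpos_of_nonneg (hoff _ _ i.succ_ne_zero) (hy 0)) hpivot.le).trans (hy _)
    obtain ⟨x, hx, hAx⟩ := ih (schurComplementZero A)
      (fun _ _ => schurComplementZero_apply_nonpos_of_ne hoff hpivot)
      (det_submatrix_castLE_schurComplementZero_pos hHS) _ hz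
    have hx₀ : 0 ≤ (y 0 - ∑ j, A 0 j.succ * x j) / A 0 0 := by
      have : ∑ j, A 0 j.succ * x j ≤ 0 := Finset.sum_nonpos fun j _ =>
        mul_nonpos_of_nonpos_of_nonneg (hoff _ _ j.succ_ne_zero.symm) (hx j)
      exact div_nonneg (by linarith [hy 0]) hpivot.le
    exact ⟨_, Fin.cases hx₀ hx, mulVec_cons_eq_of_schurComplementZero hpivot.ne' hAx⟩

/-- A `Z⁺`-matrix satisfying the Hawkins-Simon condition (all leading principal
minors positive) maps some nonnegative vector `x` onto any given nonnegative `y`. -/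
theorem zplus_hawkinsSimon_surjective_on_nonneg
    (K : ℕ) (A : Matrix (Fin K) (Fin K) ℝ)
    (hdiag : ∀ i, 0 < A i i)
    (hoff : ∀ i j, i ≠ j → A i j ≤ 0)
    (hHS : ∀ k : ℕ, ∀ h : k ≤ K,
      0 < (A.submatrix (Fin.castLE h) (Fin.castLE h)).det)
    (y : Fin K → ℝ) (hy : ∀ i, 0 ≤ y i) :
    ∃ x : Fin K → ℝ, (∀ i, 0 ≤ x i) ∧ A.mulVec x = y :=
  zplus_hawkinsSimon_surjective_on_nonneg_general K A hoff hHS y hy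
end

section
/- An acyclic Z^+-matrix satisfies the Hawkins-Simon condition: if Z is a K×K matrix with positive diagonal and nonpositive off-diagonal entries such that every cycle of off-diagonal entries has product zero (for every sequence of distinct indices i_1,...,i_q with q ≥ 2, the product z_{i_1 i_q}·∏_{j=1}^{q−1} z_{i_{j+1} i_j} = 0), then all leading principal minors of Z are positive. -/
open Finset

/-- For a matrix satisfying the acyclicity hypothesis, every non-identity permutation
contributes zero to the determinant. -/
lemma acyclic_prod_eq_zero {n : ℕ} (A : Matrix (Fin n) (Fin n) ℝ)
    (hA : ∀ (m : ℕ) (k : Fin (m + 2) → Fin n), Function.Injective k →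
      A (k 0) (k (Fin.last (m + 1))) *
        ∏ i : Fin (m + 1), A (k i.succ) (k i.castSucc) = 0)
    (σ : Equiv.Perm (Fin n)) (hσ : σ ≠ 1) :
    ∏ i, A (σ i) i = 0 := by
  obtain ⟨i, hi⟩ : ∃ i, σ i ≠ i := by
    by_contra h
    push_neg at h
    exact hσ (Equiv.ext h)
  have hper : i ∈ Function.periodicPts ⇑σ := by
    refine ⟨orderOf σ, orderOf_pos σ, ?_⟩
    show (⇑σ)^[orderOf σ] i = i
    simp [Equiv.Perm.iterate_eq_pow, pow_orderOf_eq_one]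
  set q := Function.minimalPeriod ⇑σ i with hq
  have hq1 : q ≠ 1 := by
    intro h
    have := Function.iterate_minimalPeriod (f := ⇑σ) (x := i)
    rw [← hq, h] at this
    exact hi this
  have hqpos : 0 < q := Function.minimalPeriod_pos_of_mem_periodicPts hper
  obtain ⟨m, hm⟩ : ∃ m, q = m + 2 := by
    rcases q with _ | _ | q
    · omega
    · omega
    · exact ⟨q, rfl⟩
  set k : Fin (m + 2) → Fin n := fun j => (⇑σ)^[(j : ℕ)] i with hk
  have hkinj : Function.Injective k := by
    intro a b hab
    have := Function.iterate_injOn_Iio_minimalPeriod (f := ⇑σ) (x := i)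
      (by simpa [hm] using a.isLt : (a : ℕ) ∈ Set.Iio q)
      (by simpa [hm] using b.isLt : (b : ℕ) ∈ Set.Iio q) hab
    exact Fin.ext this
  have hcycle : A (k 0) (k (Fin.last (m + 1))) *
      ∏ j : Fin (m + 1), A (k j.succ) (k j.castSucc) = 0 := hA m k hkinj
  -- the product over the orbit equals the cycle product
  have horbit : ∏ j : Fin (m + 2), A (σ (k j)) (k j) = 0 := by
    rw [Fin.prod_univ_castSucc]
    have hlast : σ (k (Fin.last (m + 1))) = k 0 := by
      show σ ((⇑σ)^[(m + 1 : ℕ)] i) = (⇑σ)^[(0 : ℕ)] i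
      rw [← Function.iterate_succ_apply' (⇑σ) (m + 1) i]
      have : (⇑σ)^[q] i = i := Function.iterate_minimalPeriod
      rw [hm] at this
      simpa using this
    have hstep : ∀ j : Fin (m + 1), σ (k j.castSucc) = k j.succ := by
      intro j
      show σ ((⇑σ)^[((j : ℕ))] i) = (⇑σ)^[((j : ℕ) + 1)] i
      rw [Function.iterate_succ_apply']
    calc (∏ j : Fin (m + 1), A (σ (k j.castSucc)) (k j.castSucc)) *
          A (σ (k (Fin.last (m + 1)))) (k (Fin.last (m + 1)))
        = (∏ j : Fin (m + 1), A (k j.succ) (k j.castSucc)) *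
          A (k 0) (k (Fin.last (m + 1))) := by
          rw [hlast]
          congr 1
          exact Finset.prod_congr rfl fun j _ => by rw [hstep]
      _ = 0 := by rw [mul_comm]; exact hcycle
  -- split the full product over the orbit and its complement
  have hsub : (Finset.univ.image k) ⊆ Finset.univ := Finset.subset_univ _
  have : ∏ j ∈ Finset.univ.image k, A (σ j) j = 0 := by
    rw [Finset.prod_image (fun a _ b _ h => hkinj h)]
    exact horbit
  calc ∏ j, A (σ j) j
      = (∏ j ∈ Finset.univ.image k, A (σ j) j) *
        ∏ j ∈ (Finset.univ.image k)ᶜ, A (σ j) j := by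
        rw [Finset.prod_mul_prod_compl]
    _ = 0 := by rw [this, zero_mul]

lemma acyclic_det_eq_prod_diag {n : ℕ} (A : Matrix (Fin n) (Fin n) ℝ)
    (hA : ∀ (m : ℕ) (k : Fin (m + 2) → Fin n), Function.Injective k →
      A (k 0) (k (Fin.last (m + 1))) *
        ∏ i : Fin (m + 1), A (k i.succ) (k i.castSucc) = 0) :
    A.det = ∏ i, A i i := by
  rw [Matrix.det_apply]
  rw [Finset.sum_eq_single (1 : Equiv.Perm (Fin n))]
  · simp
  · intro σ _ hσ
    rw [acyclic_prod_eq_zero A hA σ hσ, smul_zero]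
  · intro h
    exact absurd (Finset.mem_univ _) h

/-- An acyclic `Z⁺`-matrix satisfies the Hawkins-Simon condition: if every cycle of
off-diagonal entries has product zero, then all leading principal minors are positive. -/
theorem acyclic_zplus_hawkinsSimon
    (K : ℕ) (Z : Matrix (Fin K) (Fin K) ℝ)
    (hdiag : ∀ i, 0 < Z i i)
    (hoff : ∀ i j, i ≠ j → Z i j ≤ 0)
    -- acyclicity: for every injective sequence of indices i₁,…,i_q (q ≥ 2),
    -- z_{i₁ i_q} · ∏_{j=1}^{q-1} z_{i_{j+1} i_j} = 0
    (hacyc : ∀ (m : ℕ) (k : Fin (m + 2) → Fin K), Function.Injective k →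
      Z (k 0) (k (Fin.last (m + 1))) *
        ∏ i : Fin (m + 1), Z (k i.succ) (k i.castSucc) = 0) :
    ∀ (k : ℕ) (h : k ≤ K),
      0 < (Z.submatrix (Fin.castLE h) (Fin.castLE h)).det := by
  intro k h
  set A := Z.submatrix (Fin.castLE h) (Fin.castLE h) with hAdef
  have hA : ∀ (m : ℕ) (κ : Fin (m + 2) → Fin k), Function.Injective κ →
      A (κ 0) (κ (Fin.last (m + 1))) *
        ∏ i : Fin (m + 1), A (κ i.succ) (κ i.castSucc) = 0 := by
    intro m κ hκ
    exact hacyc m (fun j => Fin.castLE h (κ j))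
      ((Fin.castLE_injective h).comp hκ)
  rw [acyclic_det_eq_prod_diag A hA]
  exact Finset.prod_pos fun i _ => hdiag _
end

section
/- Every acyclic structured production system is viable: if the professional production system ζ admits no cycles among input relations, then there exists a price system (p,q) with p in the relative interior of the unit simplex and q ≫ 0 such that I_k(p,q) = (p,q)·ζ(k) > 0 for all k ∈ L. -/
open Finset


private lemma path_of_transGen {α : Type*} {R : α → α → Prop} {a b : α}
    (h : Relation.TransGen R a b) :
    ∃ (n : ℕ) (f : ℕ → α), 0 < n ∧ f 0 = a ∧ f n = b ∧ ∀ i < n, R (f i) (f (i+1)) := by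
  induction h with
  | @single c hac =>
      refine ⟨1, fun i => if i = 0 then a else c, one_pos, by simp, by simp, ?_⟩
      intro i hi
      interval_cases i
      simpa using hac
  | @tail b c hab hbc ih =>
      obtain ⟨n, f, hn, h0, hnb, hstep⟩ := ih
      refine ⟨n+1, fun i => if i ≤ n then f i else c, n.succ_pos, by simp [h0], by simp, ?_⟩
      intro i hi
      show R (if i ≤ n then f i else c) (if i + 1 ≤ n then f (i+1) else c)
      rcases lt_or_eq_of_le (Nat.lt_succ_iff.mp hi) with h | h
      · rw [if_pos (Nat.le_of_lt h), if_pos (Nat.succ_le_of_lt h)]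
        exact hstep i h
      · subst h
        rw [if_pos le_rfl, if_neg (by omega), hnb]
        exact hbc

private lemma no_cycle_irrefl {α : Type*} {R : α → α → Prop}
    (hirr : ∀ x, ¬ R x x)
    (hac : ∀ (m : ℕ) (k : Fin (m+2) → α), Function.Injective k →
      ¬(R (k 0) (k (Fin.last (m+1))) ∧ ∀ i : Fin (m+1), R (k i.succ) (k i.castSucc))) :
    ∀ a, ¬ Relation.TransGen R a a := by
  intro a h
  obtain ⟨n, f, hn, h0, hna, hstep⟩ := path_of_transGen h
  have hP : ∃ m : ℕ, 0 < m ∧ ∃ g : ℕ → α, g 0 = g m ∧ ∀ i < m, R (g i) (g (i+1)) :=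
    ⟨n, hn, f, by rw [h0, hna], hstep⟩
  classical
  obtain ⟨hpos, g, hclosed, hg⟩ := Nat.find_spec hP
  set N := Nat.find hP with hN
  -- minimality
  have hmin : ∀ m < N, ¬(0 < m ∧ ∃ g : ℕ → α, g 0 = g m ∧ ∀ i < m, R (g i) (g (i+1))) :=
    fun m hm => Nat.find_min hP hm
  -- N ≥ 2
  have hN2 : 2 ≤ N := by
    by_contra h2
    push_neg at h2
    have hN1 : N = 1 := by omega
    have h01 : R (g 0) (g 1) := hg 0 (by omega)
    apply hirr (g 0)
    rwa [show (1:ℕ) = N by omega, ← hclosed] at h01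
  -- g injective on [0, N)
  have hinj : ∀ i j, i < N → j < N → g i = g j → i = j := by
    intro i j hi hj hij
    by_contra hne
    wlog hlt : i < j generalizing i j
    · exact this j i hj hi hij.symm (Ne.symm hne) (by omega)
    · refine hmin (j - i) (by omega) ⟨by omega, fun t => g (i + t), ?_, ?_⟩
      · show g (i + 0) = g (i + (j - i))
        rw [Nat.add_zero, show i + (j - i) = j by omega, hij]
      · intro t ht
        show R (g (i + t)) (g (i + (t+1)))
        rw [show i + (t+1) = (i+t)+1 by omega]
        exact hg (i+t) (by omega)
  obtain ⟨M, hM⟩ : ∃ M, N = M + 2 := ⟨N - 2, by omega⟩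
  refine hac M (fun t => g (M + 1 - t.val)) ?_ ⟨?_, ?_⟩
  · intro s t hst
    have hs : M + 1 - s.val < N := by omega
    have ht : M + 1 - t.val < N := by omega
    have := hinj _ _ hs ht hst
    have hs2 := s.isLt
    have ht2 := t.isLt
    exact Fin.ext (by omega)
  · have : (Fin.last (M+1)).val = M + 1 := rfl
    simp only [this, Fin.val_zero, Nat.sub_zero, Nat.sub_self]
    have := hg (M+1) (by omega)
    rwa [show M + 1 + 1 = N by omega, ← hclosed] at this
  · intro i
    have hi := i.isLt
    have h1 : (i.succ : Fin (M+2)).val = i.val + 1 := rfl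
    have h2 : (i.castSucc : Fin (M+2)).val = i.val := rfl
    simp only [h1, h2]
    rw [show M + 1 - (i.val + 1) = M - i.val by omega,
        show M + 1 - i.val = (M - i.val) + 1 by omega]
    exact hg (M - i.val) (by omega)

private lemma exists_price {n : ℕ} (Q : Fin n → ℝ) (y : Fin n → Fin n → ℝ)
    (hQ : ∀ k, 0 < Q k) (hy : ∀ k j, 0 ≤ y k j)
    (hwf : WellFounded (fun j k => 0 < y k j)) :
    ∃ price : Fin n → ℝ, (∀ k, 0 < price k) ∧
      ∀ k, Q k * price k - ∑ j, y k j * price j = 1 := by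
  classical
  set price : Fin n → ℝ := hwf.fix
    (fun k ih => (1 + ∑ j : Fin n, if h : 0 < y k j then y k j * ih j h else 0) / Q k)
    with hprice
  have heq : ∀ k, price k =
      (1 + ∑ j : Fin n, if 0 < y k j then y k j * price j else 0) / Q k := by
    intro k
    rw [hprice, WellFounded.fix_eq]
    simp only [← hprice, dite_eq_ite]
  have hpos : ∀ k, 0 < price k := by
    intro k
    induction k using hwf.induction with
    | _ k ih =>
      rw [heq k]
      refine div_pos ?_ (hQ k)
      have : (0:ℝ) ≤ ∑ j : Fin n, if 0 < y k j then y k j * price j else 0 := by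
        refine Finset.sum_nonneg fun j _ => ?_
        split_ifs with h
        · exact le_of_lt (mul_pos h (ih j h))
        · exact le_rfl
      linarith
  refine ⟨price, hpos, fun k => ?_⟩
  have hsum : ∑ j, y k j * price j =
      ∑ j : Fin n, if 0 < y k j then y k j * price j else 0 := by
    refine Finset.sum_congr rfl fun j _ => ?_
    split_ifs with h
    · rfl
    · have : y k j = 0 := le_antisymm (not_lt.mp h) (hy k j)
      rw [this, zero_mul]
  rw [hsum, heq k, mul_div_cancel₀ _ (ne_of_gt (hQ k))]
  ring

/-- Every acyclic structured production system is viable: there exists a price system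
with consumption-good prices in the relative interior of the unit simplex and strictly
positive intermediate-good prices under which every professional income is strictly
positive. -/
theorem acyclic_implies_viable
    (ℓc ℓp : ℕ) (hℓc : 1 ≤ ℓc)
    (Q : Fin (ℓc + ℓp) → ℝ) (y : Fin (ℓc + ℓp) → Fin (ℓc + ℓp) → ℝ)
    (hQ : ∀ k, 0 < Q k) (hy : ∀ k j, 0 ≤ y k j) (hyk : ∀ k, y k k = 0)
    -- acyclicity: no cycle of input relations; every cyclic product of inputs vanishes
    (hacyc : ∀ (m : ℕ) (k : Fin (m + 2) → Fin (ℓc + ℓp)), Function.Injective k →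
      y (k 0) (k (Fin.last (m + 1))) *
        ∏ i : Fin (m + 1), y (k i.succ) (k i.castSucc) = 0) :
    ∃ (p : Fin ℓc → ℝ) (q : Fin ℓp → ℝ),
      (∀ i, 0 < p i) ∧ (∑ i, p i = 1) ∧ (∀ j, 0 < q j) ∧
      ∀ k, 0 < ∑ j, Fin.append p q j * ((if j = k then Q k else 0) - y k j) := by
  classical
  set R : Fin (ℓc + ℓp) → Fin (ℓc + ℓp) → Prop := fun k j => 0 < y k j with hR
  -- irreflexivity of R
  have hirr : ∀ x, ¬ R x x := by
    intro x hx
    rw [hR] at hx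
    simp [hyk x] at hx
  -- no injective cycles
  have hac : ∀ (m : ℕ) (k : Fin (m+2) → Fin (ℓc + ℓp)), Function.Injective k →
      ¬(R (k 0) (k (Fin.last (m+1))) ∧ ∀ i : Fin (m+1), R (k i.succ) (k i.castSucc)) := by
    intro m k hk ⟨h1, h2⟩
    have := hacyc m k hk
    have hprod : 0 < y (k 0) (k (Fin.last (m+1))) *
        ∏ i : Fin (m+1), y (k i.succ) (k i.castSucc) :=
      mul_pos h1 (Finset.prod_pos fun i _ => h2 i)
    rw [this] at hprod
    exact lt_irrefl 0 hprod
  -- well-foundedness of the input relation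
  have hirrT : ∀ a, ¬ Relation.TransGen R a a := no_cycle_irrefl hirr hac
  have hwf : WellFounded (fun j k => 0 < y k j) := by
    have hirrT' : ∀ a, ¬ Relation.TransGen (Function.swap R) a a :=
      fun a h => hirrT a (Relation.transGen_swap.mp h)
    have htrans : IsTrans _ (Relation.TransGen (Function.swap R)) := inferInstance
    have hirr' : IsIrrefl _ (Relation.TransGen (Function.swap R)) := ⟨hirrT'⟩
    have hwfT : WellFounded (Relation.TransGen (Function.swap R)) :=
      Finite.wellFounded_of_trans_of_irrefl _
    refine Subrelation.wf (fun {j k} h => ?_) hwfT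
    exact Relation.TransGen.single h
  obtain ⟨price, hppos, hinc⟩ := exists_price Q y hQ hy hwf
  -- normalization
  set T : ℝ := ∑ i : Fin ℓc, price (Fin.castAdd ℓp i) with hT
  have hTpos : 0 < T := by
    have : Nonempty (Fin ℓc) := ⟨⟨0, hℓc⟩⟩
    exact Finset.sum_pos (fun i _ => hppos _) Finset.univ_nonempty
  refine ⟨fun i => price (Fin.castAdd ℓp i) / T, fun j => price (Fin.natAdd ℓc j) / T,
    fun i => div_pos (hppos _) hTpos, ?_, fun j => div_pos (hppos _) hTpos, ?_⟩
  · rw [← Finset.sum_div, ← hT, div_self (ne_of_gt hTpos)]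
  · intro k
    have happ : ∀ j, Fin.append (fun i => price (Fin.castAdd ℓp i) / T)
        (fun j => price (Fin.natAdd ℓc j) / T) j = price j / T := by
      intro j
      refine Fin.addCases (fun i => ?_) (fun i => ?_) j
      · rw [Fin.append_left]
      · rw [Fin.append_right]
    have hrw : ∑ j, Fin.append (fun i => price (Fin.castAdd ℓp i) / T)
        (fun j => price (Fin.natAdd ℓc j) / T) j * ((if j = k then Q k else 0) - y k j)
        = (∑ j, price j * ((if j = k then Q k else 0) - y k j)) / T := by
      rw [Finset.sum_div]
      refine Finset.sum_congr rfl fun j _ => ?_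
      rw [happ j, div_mul_eq_mul_div]
    rw [hrw]
    have hnum : ∑ j, price j * ((if j = k then Q k else 0) - y k j) = 1 := by
      have hsplit : ∀ j : Fin (ℓc + ℓp),
          price j * ((if j = k then Q k else 0) - y k j)
          = (if j = k then price j * Q k else 0) - y k j * price j := by
        intro j
        split_ifs with h
        · ring
        · ring
      rw [Finset.sum_congr rfl fun j _ => hsplit j, Finset.sum_sub_distrib,
        Finset.sum_ite_eq' Finset.univ k (fun j => price j * Q k)]
      simp only [Finset.mem_univ, if_pos]
      rw [mul_comm (price k) (Q k)]
      exact hinc k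
    rw [hnum]
    exact div_pos one_pos hTpos
end

section
/- Every acyclic structured production system is coherent: if ζ admits no cycles, then the matrix Z representing ζ is nonsingular; indeed det Z > 0. -/
/-!
Expand `det Z` over permutations. A permutation `σ ≠ 1` moves some index, and the orbit of that
index is a cycle `k₀ → k₁ → ⋯ → k₀` of distinct indices; acyclicity makes some `y (σ z) z` on
this cycle vanish, and since `σ z ≠ z` that entry of `Z` is `-y (σ z) z = 0`. So only the
identity contributes, and `det Z = ∏ Z k k = ∏ Q k > 0`.
-/

open Finset Function

theorem Function.exists_injective_cycle {α : Type*} {f : α → α} {x : α}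
    (hx : x ∈ periodicPts f) (hfx : f x ≠ x) :
    ∃ (m : ℕ) (k : Fin (m + 2) → α), Injective k ∧ ∀ i, f (k i) = k (i + 1) := by
  obtain ⟨m, hm⟩ : ∃ m, minimalPeriod f x = m + 2 := by
    have hpos := minimalPeriod_pos_of_mem_periodicPts hx
    have hne : minimalPeriod f x ≠ 1 := fun h => hfx (minimalPeriod_eq_one_iff_isFixedPt.mp h)
    exact ⟨minimalPeriod f x - 2, by omega⟩
  refine ⟨m, fun i => f^[i] x, fun i j hij => Fin.ext ?_, fun i => ?_⟩
  · exact iterate_injOn_Iio_minimalPeriod (by simp [hm]) (by simp [hm]) hij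
  · show f (f^[i] x) = f^[(i + 1 : Fin (m + 2))] x
    rw [Fin.val_add, Fin.val_one', Nat.add_mod_mod, ← iterate_succ_apply' f,
      ← iterate_mod_minimalPeriod_eq, hm]

/-- Every cycle of distinct vertices carries an edge of weight zero, `y a b` weighing `b → a`. -/
def IsAcyclic {α R : Type*} [CommMonoidWithZero R] (y : α → α → R) : Prop :=
  ∀ (m : ℕ) (k : Fin (m + 2) → α), Injective k →
    y (k 0) (k (Fin.last (m + 1))) * ∏ i : Fin (m + 1), y (k i.succ) (k i.castSucc) = 0

theorem IsAcyclic.exists_apply_eq_zero {α R : Type*} [CommMonoidWithZero R] [NoZeroDivisors R]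
    [Nontrivial R] {y : α → α → R} (hy : IsAcyclic y) {f : α → α} {x : α}
    (hx : x ∈ periodicPts f) (hfx : f x ≠ x) : ∃ z, f z ≠ z ∧ y (f z) z = 0 := by
  obtain ⟨m, k, hk, hfk⟩ := exists_injective_cycle hx hfx
  have hmoved : ∀ i, f (k i) ≠ k i := fun i h => by
    rw [hfk, hk.eq_iff] at h
    simp at h
  rcases mul_eq_zero.mp (hy m k hk) with h | h
  · refine ⟨k (Fin.last _), hmoved _, ?_⟩
    rwa [hfk, Fin.last_add_one]
  · obtain ⟨i, -, hi⟩ := prod_eq_zero_iff.mp h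
    refine ⟨k i.castSucc, hmoved _, ?_⟩
    rwa [hfk, Fin.coeSucc_eq_succ]

theorem Matrix.det_eq_prod_diag_of_forall_perm_ne_one {n R : Type*} [Fintype n] [DecidableEq n]
    [CommRing R] {A : Matrix n n R} (hA : ∀ σ : Equiv.Perm n, σ ≠ 1 → ∃ i, A (σ i) i = 0) :
    A.det = ∏ i, A i i := by
  rw [det_apply, sum_eq_single_of_mem 1 (mem_univ _)]
  · simp
  · intro σ _ hσ
    obtain ⟨i, hi⟩ := hA σ hσ
    rw [prod_eq_zero (f := fun j => A (σ j) j) (mem_univ i) hi, smul_zero]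

theorem acyclic_implies_coherent_general
    (ℓ : ℕ) (Q : Fin ℓ → ℝ) (y : Fin ℓ → Fin ℓ → ℝ)
    (hQ : ∀ k, 0 < Q k) (hyk : ∀ k, y k k = 0)
    (hacyc : ∀ (m : ℕ) (k : Fin (m + 2) → Fin ℓ), Function.Injective k →
      y (k 0) (k (Fin.last (m + 1))) *
        ∏ i : Fin (m + 1), y (k i.succ) (k i.castSucc) = 0)
    (Z : Matrix (Fin ℓ) (Fin ℓ) ℝ)
    (hZ : ∀ k j, Z k j = (if j = k then Q k else 0) - y k j) :
    0 < Z.det := by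
  have hy : IsAcyclic y := hacyc
  have hZ_diag : ∀ k, Z k k = Q k := fun k => by rw [hZ, if_pos rfl, hyk, sub_zero]
  have hZ_perm : ∀ σ : Equiv.Perm (Fin ℓ), σ ≠ 1 → ∃ z, Z (σ z) z = 0 := by
    intro σ hσ
    obtain ⟨x, hx⟩ := DFunLike.ne_iff.mp hσ
    obtain ⟨z, hz, hyz⟩ := hy.exists_apply_eq_zero (σ.injective.mem_periodicPts x) hx
    exact ⟨z, by rw [hZ, if_neg hz.symm, hyz, sub_zero]⟩
  rw [Matrix.det_eq_prod_diag_of_forall_perm_ne_one hZ_perm]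
  simp only [hZ_diag]
  exact prod_pos fun k _ => hQ k

/-- Every acyclic structured production system is coherent: the matrix `Z`
representing the professional production system is nonsingular; in fact `det Z > 0`. -/
theorem acyclic_implies_coherent
    (ℓ : ℕ) (Q : Fin ℓ → ℝ) (y : Fin ℓ → Fin ℓ → ℝ)
    (hQ : ∀ k, 0 < Q k) (hy : ∀ k j, 0 ≤ y k j) (hyk : ∀ k, y k k = 0)
    (hacyc : ∀ (m : ℕ) (k : Fin (m + 2) → Fin ℓ), Function.Injective k →
      y (k 0) (k (Fin.last (m + 1))) *
        ∏ i : Fin (m + 1), y (k i.succ) (k i.castSucc) = 0)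
    (Z : Matrix (Fin ℓ) (Fin ℓ) ℝ)
    (hZ : ∀ k j, Z k j = (if j = k then Q k else 0) - y k j) :
    0 < Z.det :=
  acyclic_implies_coherent_general ℓ Q y hQ hyk hacyc Z hZ
end

section
/- If a structured production system is weakly completely viable, then it satisfies the weak restricted input property: no consumption good is used as an input in the production of any consumption good, i.e., y^k_m = 0 for all k, m ∈ L_c. -/
open Finset

/-- If a structured production system is weakly completely viable, then it satisfies
the weak restricted input property: no consumption good is used as an input in the
production of any consumption good. -/
theorem weakly_completely_viable_implies_wrip
    (ℓc ℓp : ℕ)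
    (Q : Fin (ℓc + ℓp) → ℝ) (y : Fin (ℓc + ℓp) → Fin (ℓc + ℓp) → ℝ)
    (hQ : ∀ k, 0 < Q k) (hy : ∀ k j, 0 ≤ y k j) (hyk : ∀ k, y k k = 0)
    -- weak complete viability
    (hWCV : ∀ p : Fin ℓc → ℝ, (∀ i, 0 ≤ p i) → (∑ i, p i = 1) →
      ∃ q : Fin ℓp → ℝ, (∀ j, 0 ≤ q j) ∧
        ∀ k, 0 ≤ ∑ j, Fin.append p q j * ((if j = k then Q k else 0) - y k j)) :
    ∀ k m : Fin ℓc, y (Fin.castAdd ℓp k) (Fin.castAdd ℓp m) = 0 := by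
  intro k m
  by_cases hmk : m = k
  · subst hmk; exact hyk _
  -- price vector: all weight on good m
  set p : Fin ℓc → ℝ := fun i => if i = m then 1 else 0 with hp
  have hp0 : ∀ i, 0 ≤ p i := by
    intro i; simp only [hp]; split <;> norm_num
  have hp1 : ∑ i, p i = 1 := by simp [hp]
  obtain ⟨q, hq0, hqI⟩ := hWCV p hp0 hp1
  set K := Fin.castAdd ℓp k with hK
  have hI := hqI K
  rw [Fin.sum_univ_add] at hI
  have h1 : ∀ i : Fin ℓc,
      Fin.append p q (Fin.castAdd ℓp i) *
        ((if Fin.castAdd ℓp i = K then Q K else 0) - y K (Fin.castAdd ℓp i))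
      = p i * ((if i = k then Q K else 0) - y K (Fin.castAdd ℓp i)) := by
    intro i
    rw [Fin.append_left]
    congr 2
    simp [hK, Fin.castAdd_inj]
  have h2 : ∀ i : Fin ℓp,
      Fin.append p q (Fin.natAdd ℓc i) *
        ((if Fin.natAdd ℓc i = K then Q K else 0) - y K (Fin.natAdd ℓc i))
      = q i * (0 - y K (Fin.natAdd ℓc i)) := by
    intro i
    rw [Fin.append_right]
    congr 2
    rw [if_neg]
    simp only [hK, Fin.ext_iff, Fin.coe_natAdd, Fin.coe_castAdd]
    have := k.isLt
    omega
  simp only [h1, h2] at hI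
  have hs1 : ∑ i : Fin ℓc, p i * ((if i = k then Q K else 0) - y K (Fin.castAdd ℓp i))
      = - y K (Fin.castAdd ℓp m) := by
    rw [Finset.sum_eq_single m]
    · simp [hp, if_neg hmk]
    · intro b _ hb; simp [hp, if_neg hb]
    · intro h; exact absurd (Finset.mem_univ m) h
  rw [hs1] at hI
  have hs2 : ∑ i : Fin ℓp, q i * (0 - y K (Fin.natAdd ℓc i)) ≤ 0 := by
    apply Finset.sum_nonpos
    intro i _
    apply mul_nonpos_of_nonneg_of_nonpos (hq0 i)
    simpa using hy K (Fin.natAdd ℓc i)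
  have := hy K (Fin.castAdd ℓp m)
  linarith
end
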